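/- arXiv:1702.00645 — 3 statements merged into one kernel-verified Lean document; each statement's English description precedes it below -/
import Mathlib

section
/- If X is a real random variable with H([X]_1) < ∞, then the lower information dimension satisfies 0 ≤ liminf_{m→∞} H([X]_m)/log m ≤ limsup_{m→∞} H([X]_m)/log m ≤ 1. -/
open MeasureTheory ProbabilityTheory Real Filter Topology
open scoped ENNReal NNReal Classical

/-- Uniform quantization of `x` with step size `1/m`: `[x]_m = ⌊m x⌋ / m`. -/
noncomputable def qz (m : ℕ) (x : ℝ) : ℝ := ⌊(m : ℝ) * x⌋ / m

/-- Shannon entropy (in nats, extended-real-valued) of a measure, computed over atoms. -/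
noncomputable def pentropy {E : Type*} [MeasurableSpace E] (ν : Measure E) : ℝ≥0∞ :=
  ∑' x : E, ENNReal.ofReal (Real.negMulLog ((ν {x}).toReal))

/-- Conditional Shannon entropy of `X : Ω → E` given an arbitrary random variable `W`,
via the regular conditional distribution. -/
noncomputable def centropy {Ω β E : Type*} [MeasurableSpace Ω] [MeasurableSpace β]
    [MeasurableSpace E] [StandardBorelSpace E] [Nonempty E]
    (μ : Measure Ω) [IsFiniteMeasure μ] (X : Ω → E) (W : Ω → β) : ℝ≥0∞ :=
  ∫⁻ b, pentropy ((ProbabilityTheory.condDistrib X W μ) b) ∂(μ.map W)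

/-- A process `{X_t, t ∈ ℤ}` is stationary if all its shifts have the same law. -/
def Stationary {Ω : Type*} [MeasurableSpace Ω] (μ : Measure Ω) (X : ℤ → Ω → ℝ) : Prop :=
  ∀ n : ℤ, μ.map (fun ω => fun t : ℤ => X (t + n) ω) = μ.map (fun ω => fun t : ℤ => X t ω)

/-- Entropy rate of the process quantized with step `1/m`:
`H̄([X]_m) = lim_k H([X_1]_m,…,[X_k]_m)/k` (the limit exists for stationary processes;
we express it as a `liminf`). -/
noncomputable def entRate {Ω : Type*} [MeasurableSpace Ω] (μ : Measure Ω)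
    (X : ℤ → Ω → ℝ) (m : ℕ) : ℝ≥0∞ :=
  Filter.atTop.liminf (fun k : ℕ =>
    pentropy (μ.map (fun ω => fun t : Fin k => qz m (X ((t : ℕ) + 1 : ℤ) ω))) / (k : ℝ≥0∞))

/-- Mutual information of a joint law, as the KL divergence from the product of marginals. -/
noncomputable def mutualInfo {α β : Type*} [MeasurableSpace α] [MeasurableSpace β]
    (ν : Measure (α × β)) : ℝ≥0∞ :=
  if ν ≪ (ν.map Prod.fst).prod (ν.map Prod.snd) ∧
      Integrable (fun p => Real.log ((ν.rnDeriv ((ν.map Prod.fst).prod (ν.map Prod.snd)) p).toReal)) ν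
  then ENNReal.ofReal
      (∫ p, Real.log ((ν.rnDeriv ((ν.map Prod.fst).prod (ν.map Prod.snd)) p).toReal) ∂ν)
  else ⊤

/-- Rate-distortion function of a `k`-dimensional source under squared-error distortion. -/
noncomputable def RD {k : ℕ} (μX : Measure (Fin k → ℝ)) (D : ℝ) : ℝ≥0∞ :=
  ⨅ (ν : Measure ((Fin k → ℝ) × (Fin k → ℝ))) (_ : IsProbabilityMeasure ν)
    (_ : ν.map Prod.fst = μX)
    (_ : ∫ p, ∑ l, (p.2 l - p.1 l) ^ 2 ∂ν ≤ D), mutualInfo ν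

/-! `[X]_1 = ⌊[X]_m⌋` is a function of `[X]_m`, and each of its values is attained by at most `m`
values of `[X]_m`. Grouping the atoms of `[X]_m` along these fibres and applying Jensen's inequality
to `negMulLog` in each fibre gives `H([X]_m) ≤ H([X]_1) + log m`. Hence
`0 ≤ H([X]_m) / log m ≤ 1 + H([X]_1) / log m → 1`. -/

theorem Real.sum_negMulLog_le_negMulLog_sum_add {ι : Type*} (s : Finset ι) {q : ι → ℝ}
    (hq : ∀ i ∈ s, 0 ≤ q i) {n : ℕ} (hn : s.card ≤ n) :
    ∑ i ∈ s, negMulLog (q i) ≤ negMulLog (∑ i ∈ s, q i) + (∑ i ∈ s, q i) * log n := by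
  rcases s.eq_empty_or_nonempty with rfl | hs
  · simp
  set c : ℝ := (s.card : ℝ) with hc_def
  have hc : 0 < c := by rw [hc_def]; exact_mod_cast hs.card_pos
  have hjensen := concaveOn_negMulLog.le_map_sum (t := s) (w := fun _ ↦ c⁻¹) (p := q)
    (fun _ _ ↦ by positivity) (by simp [c, hc.ne']) hq
  have hinv : negMulLog c⁻¹ = c⁻¹ * log c := by simp [negMulLog, log_inv]
  simp only [smul_eq_mul, ← Finset.mul_sum, negMulLog_mul, hinv] at hjensen
  calc ∑ i ∈ s, negMulLog (q i)
      ≤ negMulLog (∑ i ∈ s, q i) + (∑ i ∈ s, q i) * log c :=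
        le_of_mul_le_mul_left (by linarith) (inv_pos.2 hc)
    _ ≤ _ := by
        gcongr
        · exact Finset.sum_nonneg hq
        · rw [hc_def]; exact_mod_cast hn

theorem Int.encard_preimage_ediv_natCast_le {m : ℕ} (hm : 0 < m) (n : ℤ) :
    ((fun k : ℤ ↦ k / m) ⁻¹' {n}).encard ≤ m := by
  have hsub : (fun k : ℤ ↦ k / m) ⁻¹' {n} ⊆ Set.Ico (m * n) (m * n + m) := by
    rintro k rfl
    have hm' : (0 : ℤ) < m := by exact_mod_cast hm
    have h1 := Int.ediv_mul_le k hm'.ne'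
    have h2 := Int.lt_ediv_add_one_mul_self k hm'
    constructor <;> linarith
  calc _ ≤ (Set.Ico (m * n : ℤ) (m * n + m)).encard := Set.encard_le_encard hsub
    _ = m := by simp [← Finset.coe_Ico]

theorem pentropy_map_of_injective {α β : Type*} [MeasurableSpace α] [MeasurableSpace β]
    [MeasurableSingletonClass β] {g : α → β} (hg : Measurable g) (hinj : Function.Injective g)
    (ν : Measure α) : pentropy (ν.map g) = pentropy ν := by
  have hmap : ∀ y, ν.map g {y} = ν (g ⁻¹' {y}) := fun y ↦
    Measure.map_apply hg (measurableSet_singleton y)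
  unfold pentropy
  rw [← hinj.tsum_eq]
  · congr! with x
    have hfiber : g ⁻¹' {g x} = {x} := by ext; simp [hinj.eq_iff]
    rw [hmap, hfiber]
  · intro y hy
    by_contra hy'
    apply hy
    simp [hmap, Set.preimage_singleton_eq_empty.mpr hy']

theorem sum_ofReal_negMulLog_measure_le {α : Type*} [MeasurableSpace α]
    [MeasurableSingletonClass α] (ν : Measure α) [IsProbabilityMeasure ν] (s : Finset α) {m : ℕ}
    (hs : s.card ≤ m) :
    ∑ x ∈ s, ENNReal.ofReal (negMulLog (ν {x}).toReal) ≤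
      ENNReal.ofReal (negMulLog (ν s).toReal) + ν s * ENNReal.ofReal (log m) := by
  have hsum : (ν s).toReal = ∑ x ∈ s, (ν {x}).toReal := by
    rw [← sum_measure_singleton, ENNReal.toReal_sum fun x _ ↦ measure_ne_top ν _]
  calc ∑ x ∈ s, ENNReal.ofReal (negMulLog (ν {x}).toReal)
      = ENNReal.ofReal (∑ x ∈ s, negMulLog (ν {x}).toReal) :=
        (ENNReal.ofReal_sum_of_nonneg fun x _ ↦
          negMulLog_nonneg ENNReal.toReal_nonneg measureReal_le_one).symm
    _ ≤ ENNReal.ofReal (negMulLog (ν s).toReal + (ν s).toReal * log m) := by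
        rw [hsum]
        exact ENNReal.ofReal_le_ofReal
          (sum_negMulLog_le_negMulLog_sum_add s (fun _ _ ↦ ENNReal.toReal_nonneg) hs)
    _ ≤ _ := by
        rw [← ENNReal.ofReal_toReal (measure_ne_top ν s), ← ENNReal.ofReal_mul
          ENNReal.toReal_nonneg, ENNReal.toReal_ofReal ENNReal.toReal_nonneg]
        exact ENNReal.ofReal_add_le

theorem pentropy_le_pentropy_map_add_log {α β : Type*} [MeasurableSpace α]
    [MeasurableSingletonClass α] [MeasurableSpace β] [MeasurableSingletonClass β]
    (ν : Measure α) [IsProbabilityMeasure ν] {f : α → β} (hf : Measurable f) {m : ℕ}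
    (hfiber : ∀ y, (f ⁻¹' {y}).encard ≤ m) :
    pentropy ν ≤ pentropy (ν.map f) + ENNReal.ofReal (log m) := by
  have hgroup : ∀ y, ∑' x : f ⁻¹' {y}, ENNReal.ofReal (negMulLog (ν {x.1}).toReal) ≤
      ENNReal.ofReal (negMulLog (ν (f ⁻¹' {y})).toReal) +
        ν (f ⁻¹' {y}) * ENNReal.ofReal (log m) := by
    intro y
    have hfin := Set.finite_of_encard_le_coe (hfiber y)
    have hcard : hfin.toFinset.card ≤ m := by
      have := hfiber y
      rwa [hfin.encard_eq_coe_toFinset_card, Nat.cast_le] at this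
    rw [← hfin.coe_toFinset,
      Finset.tsum_subtype' _ fun x ↦ ENNReal.ofReal (negMulLog (ν {x}).toReal)]
    exact sum_ofReal_negMulLog_measure_le ν _ hcard
  have hpartition : ∑' y, ν (f ⁻¹' {y}) ≤ 1 :=
    (tsum_meas_le_meas_iUnion_of_disjoint ν (fun y ↦ hf (measurableSet_singleton y))
      fun _ _ h ↦ (Set.disjoint_singleton.2 h).preimage f).trans prob_le_one
  calc pentropy ν
      = ∑' y, ∑' x : f ⁻¹' {y}, ENNReal.ofReal (negMulLog (ν {x.1}).toReal) :=
        (ENNReal.tsum_fiberwise _ f).symm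
    _ ≤ ∑' y, (ENNReal.ofReal (negMulLog (ν (f ⁻¹' {y})).toReal) +
          ν (f ⁻¹' {y}) * ENNReal.ofReal (log m)) := ENNReal.tsum_le_tsum hgroup
    _ = pentropy (ν.map f) + (∑' y, ν (f ⁻¹' {y})) * ENNReal.ofReal (log m) := by
        simp only [ENNReal.tsum_add, ENNReal.tsum_mul_right, pentropy,
          Measure.map_apply hf (measurableSet_singleton _)]
    _ ≤ pentropy (ν.map f) + ENNReal.ofReal (log m) := by
        grw [hpartition, one_mul]

section Quantization

variable {Ω : Type*} [MeasurableSpace Ω] (μ : Measure Ω) {X : Ω → ℝ}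

theorem map_qz_eq_map_floor (hX : Measurable X) (m : ℕ) :
    μ.map (fun ω ↦ qz m (X ω)) =
      (μ.map fun ω ↦ ⌊(m : ℝ) * X ω⌋).map fun k : ℤ ↦ (k : ℝ) / m := by
  rw [Measure.map_map (g := fun k : ℤ ↦ (k : ℝ) / m) (measurable_of_countable _)
    (hX.const_mul _).floor]
  rfl

theorem pentropy_map_qz (hX : Measurable X) {m : ℕ} (hm : 0 < m) :
    pentropy (μ.map fun ω ↦ qz m (X ω)) = pentropy (μ.map fun ω ↦ ⌊(m : ℝ) * X ω⌋) := by
  rw [map_qz_eq_map_floor μ hX]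
  refine pentropy_map_of_injective (g := fun k : ℤ ↦ (k : ℝ) / m) (measurable_of_countable _)
    (fun k l hkl ↦ ?_) _
  have hm' : (m : ℝ) ≠ 0 := by positivity
  exact_mod_cast (div_left_inj' hm').1 hkl

theorem map_floor_eq_map_ediv (hX : Measurable X) {m : ℕ} (hm : 0 < m) :
    μ.map (fun ω ↦ ⌊X ω⌋) = (μ.map fun ω ↦ ⌊(m : ℝ) * X ω⌋).map fun k : ℤ ↦ k / (m : ℤ) := by
  rw [Measure.map_map (g := fun k : ℤ ↦ k / (m : ℤ)) (measurable_of_countable _)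
    (hX.const_mul _).floor]
  congr with ω
  exact (Int.natCast_mul_floor_div_cancel hm.ne' (X ω)).symm

theorem pentropy_map_qz_le [IsProbabilityMeasure μ] (hX : Measurable X) {m : ℕ} (hm : 0 < m) :
    pentropy (μ.map fun ω ↦ qz m (X ω)) ≤
      pentropy (μ.map fun ω ↦ qz 1 (X ω)) + ENNReal.ofReal (log m) := by
  have := Measure.isProbabilityMeasure_map (μ := μ) (hX.const_mul (m : ℝ)).floor.aemeasurable
  rw [pentropy_map_qz μ hX hm, pentropy_map_qz μ hX one_pos]
  simpa [← map_floor_eq_map_ediv μ hX hm] using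
    pentropy_le_pentropy_map_add_log (μ.map fun ω ↦ ⌊(m : ℝ) * X ω⌋)
      (measurable_of_countable _) (Int.encard_preimage_ediv_natCast_le hm)

end Quantization

theorem le_liminf_le_limsup_le_of_le_tendsto {ι : Type*} {l : Filter ι} [l.NeBot]
    {f g : ι → ℝ} {a b : ℝ} (hf : ∀ᶠ i in l, a ≤ f i) (hfg : f ≤ᶠ[l] g)
    (hg : Tendsto g l (𝓝 b)) :
    a ≤ liminf f l ∧ liminf f l ≤ limsup f l ∧ limsup f l ≤ b := by
  have hbdd_above : IsBoundedUnder (· ≤ ·) l f := hg.isBoundedUnder_le.mono_le hfg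
  have hbdd_below : IsBoundedUnder (· ≥ ·) l f := isBoundedUnder_of_eventually_ge hf
  refine ⟨le_liminf_of_le hbdd_above.isCoboundedUnder_ge hf,
    liminf_le_limsup hbdd_above hbdd_below, ?_⟩
  calc limsup f l ≤ limsup g l :=
        limsup_le_limsup hfg hbdd_below.isCoboundedUnder_le hg.isBoundedUnder_le
    _ = b := hg.limsup_eq

/-- if `H([X]_1) < ∞` then `0 ≤ d̲(X) ≤ d̄(X) ≤ 1`. -/
theorem information_dimension_between_zero_one {Ω : Type*} [MeasurableSpace Ω] (μ : Measure Ω)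
    [IsProbabilityMeasure μ] (X : Ω → ℝ) (hX : Measurable X)
    (hfin : pentropy (μ.map (fun ω => qz 1 (X ω))) < ⊤) :
    0 ≤ Filter.atTop.liminf
        (fun m : ℕ => (pentropy (μ.map (fun ω => qz m (X ω)))).toReal / Real.log m) ∧
    Filter.atTop.liminf
        (fun m : ℕ => (pentropy (μ.map (fun ω => qz m (X ω)))).toReal / Real.log m) ≤
      Filter.atTop.limsup
        (fun m : ℕ => (pentropy (μ.map (fun ω => qz m (X ω)))).toReal / Real.log m) ∧
    Filter.atTop.limsup
        (fun m : ℕ => (pentropy (μ.map (fun ω => qz m (X ω)))).toReal / Real.log m) ≤ 1 := by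
  set c := (pentropy (μ.map fun ω ↦ qz 1 (X ω))).toReal
  refine le_liminf_le_limsup_le_of_le_tendsto (g := fun m : ℕ ↦ c / log m + 1)
    (.of_forall fun m ↦ div_nonneg ENNReal.toReal_nonneg (log_natCast_nonneg m)) ?_ ?_
  · filter_upwards [eventually_ge_atTop 2] with m hm
    have hlog : 0 < log m := log_pos (by exact_mod_cast hm)
    have hbound : (pentropy (μ.map fun ω ↦ qz m (X ω))).toReal ≤ c + log m := by
      have := ENNReal.toReal_mono (by finiteness) (pentropy_map_qz_le μ hX (by omega : 0 < m))
      rwa [ENNReal.toReal_add hfin.ne ENNReal.ofReal_ne_top, ENNReal.toReal_ofReal hlog.le] at this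
    rw [div_add_one hlog.ne']
    gcongr
  · simpa using (tendsto_const_nhds.div_atTop
      (tendsto_log_atTop.comp tendsto_natCast_atTop_atTop)).add_const (1 : ℝ)
end

section
/- Shannon lower-bound via the test-function construction: with s = −m² and λ_s(x) = N^{-k} Σ_{i∈ℤ^k} 1{[x]_m = i/m} / P([X]_m = i/m), where N = 1 + 2Σ_{i=0}^∞ e^{-i²}, the function λ_s satisfies sup_{y∈ℝ^k} E[λ_s(X) e^{s Σ_ℓ (y_ℓ − X_ℓ)²}] ≤ 1. -/
open MeasureTheory ProbabilityTheory Real Filter Topology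
open scoped ENNReal NNReal Classical

noncomputable def dd (c : ℝ) (i : ℤ) : ℝ := max (max ((i:ℝ) - c) (c - i - 1)) 0

lemma dd_nonneg (c : ℝ) (i : ℤ) : 0 ≤ dd c i := le_max_right _ _

lemma exp_le_dd {c t : ℝ} {i : ℤ} (h1 : (i:ℝ) ≤ t) (h2 : t < i + 1) :
    Real.exp (-(c - t) ^ 2) ≤ Real.exp (-(dd c i) ^ 2) := by
  apply Real.exp_le_exp.2
  have hd : dd c i ≤ |c - t| := by
    apply max_le (max_le ?_ ?_) (abs_nonneg _)
    · calc (i:ℝ) - c ≤ t - c := by linarith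
      _ ≤ |t - c| := le_abs_self _
      _ = |c - t| := abs_sub_comm _ _
    · calc c - (i:ℝ) - 1 ≤ c - t := by linarith
      _ ≤ |c - t| := le_abs_self _
  have := pow_le_pow_left₀ (dd_nonneg c i) hd 2
  simp only [sq_abs] at this
  linarith

lemma summable_exp_neg_sq : Summable (fun n : ℕ => Real.exp (-(n:ℝ) ^ 2)) := by
  have hg : Summable (fun n : ℕ => Real.exp (-1) ^ n) :=
    summable_geometric_of_lt_one (Real.exp_pos _).le
      (by rw [Real.exp_lt_one_iff]; norm_num)
  refine Summable.of_nonneg_of_le (fun n => (Real.exp_pos _).le) (fun n => ?_) hg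
  rw [← Real.exp_nat_mul]
  apply Real.exp_le_exp.2
  have hn : (n:ℕ) ≤ n ^ 2 := Nat.le_self_pow two_ne_zero n
  have hn2 : (n:ℝ) ≤ (n:ℝ) ^ 2 := by exact_mod_cast hn
  linarith

set_option maxHeartbeats 1000000 in
lemma tsum_dd_le (c : ℝ) :
    ∑' i : ℤ, ENNReal.ofReal (Real.exp (-(dd c i) ^ 2)) ≤
      ENNReal.ofReal (1 + 2 * ∑' n : ℕ, Real.exp (-(n:ℝ) ^ 2)) := by
  set F : ℤ → ℝ≥0∞ := fun i => ENNReal.ofReal (Real.exp (-(dd c i) ^ 2)) with hF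
  set S : ℝ≥0∞ := ∑' n : ℕ, ENNReal.ofReal (Real.exp (-(n:ℝ) ^ 2)) with hS
  have hT : 0 ≤ ∑' n : ℕ, Real.exp (-(n:ℝ) ^ 2) := tsum_nonneg fun n => (Real.exp_pos _).le
  have hRHS : ENNReal.ofReal (1 + 2 * ∑' n : ℕ, Real.exp (-(n:ℝ) ^ 2)) = 1 + 2 * S := by
    rw [ENNReal.ofReal_add one_pos.le (by linarith), ENNReal.ofReal_one,
      ENNReal.ofReal_mul (by norm_num), hS,
      ENNReal.ofReal_tsum_of_nonneg (fun n => (Real.exp_pos _).le) summable_exp_neg_sq]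
    norm_num
  rw [hRHS]
  set j : ℤ := ⌊c⌋ with hj
  have hc1 : (j:ℝ) ≤ c := Int.floor_le c
  have hc2 : c < j + 1 := Int.lt_floor_add_one c
  have hshift : ∑' i : ℤ, F i = ∑' r : ℤ, F (j + r) := ((Equiv.addLeft j).tsum_eq F).symm
  rw [hshift, tsum_of_nat_of_neg_add_one ENNReal.summable ENNReal.summable]
  have hpos : ∀ n : ℕ, F (j + ((n:ℤ) + 1)) ≤ ENNReal.ofReal (Real.exp (-(n:ℝ) ^ 2)) := by
    intro n
    apply ENNReal.ofReal_le_ofReal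
    apply Real.exp_le_exp.2
    have hdn : (n:ℝ) ≤ dd c (j + ((n:ℤ) + 1)) := by
      refine le_trans ?_ ((le_max_left _ _).trans (le_max_left _ _ : _ ≤ dd c _))
      push_cast; linarith
    nlinarith [dd_nonneg c (j + ((n:ℤ) + 1))]
  have hneg : ∀ n : ℕ, F (j + -((n:ℤ) + 1)) ≤ ENNReal.ofReal (Real.exp (-(n:ℝ) ^ 2)) := by
    intro n
    apply ENNReal.ofReal_le_ofReal
    apply Real.exp_le_exp.2
    have hdn : (n:ℝ) ≤ dd c (j + -((n:ℤ) + 1)) := by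
      refine le_trans ?_ ((le_max_right _ _).trans (le_max_left _ _ : _ ≤ dd c _))
      push_cast; linarith
    nlinarith [dd_nonneg c (j + -((n:ℤ) + 1))]
  have h0 : F (j + ((0:ℕ):ℤ)) ≤ 1 := by
    rw [← ENNReal.ofReal_one]
    exact ENNReal.ofReal_le_ofReal (Real.exp_le_one_iff.2 (neg_nonpos.2 (sq_nonneg _)))
  have h1 : ∑' n : ℕ, F (j + (n:ℤ)) ≤ 1 + S := by
    rw [tsum_eq_zero_add' (f := fun n : ℕ => F (j + (n:ℤ))) ENNReal.summable]
    refine add_le_add h0 (ENNReal.tsum_le_tsum fun n => ?_)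
    exact_mod_cast hpos n
  have h2 : ∑' n : ℕ, F (j + -((n:ℤ) + 1)) ≤ S := ENNReal.tsum_le_tsum hneg
  calc (∑' n : ℕ, F (j + (n:ℤ))) + ∑' n : ℕ, F (j + -((n:ℤ) + 1))
      ≤ (1 + S) + S := add_le_add h1 h2
    _ = 1 + 2 * S := by ring

lemma tsum_pi_prod : ∀ {n : ℕ} (h : Fin n → ℤ → ℝ≥0∞),
    ∑' i : Fin n → ℤ, ∏ l, h l (i l) = ∏ l, ∑' j : ℤ, h l j := by
  intro n
  induction n with
  | zero =>
    intro h
    simp only [Finset.univ_eq_empty, Finset.prod_empty]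
    exact tsum_eq_single (fun l => l.elim0) fun b' hb' =>
      absurd (Subsingleton.elim b' _) hb'
  | succ n ih =>
    intro h
    rw [← (Fin.consEquiv fun _ : Fin (n+1) => ℤ).tsum_eq fun i => ∏ l, h l (i l)]
    have : ∀ p : ℤ × (Fin n → ℤ),
        (∏ l, h l (((Fin.consEquiv fun _ : Fin (n+1) => ℤ) p) l)) =
          h 0 p.1 * ∏ l : Fin n, h l.succ (p.2 l) := by
      intro p
      rw [Fin.prod_univ_succ]
      simp [Fin.consEquiv]
    simp_rw [this]
    rw [ENNReal.tsum_prod (f := fun (a : ℤ) (b : Fin n → ℤ) => h 0 a * ∏ l : Fin n, h l.succ (b l))]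
    simp_rw [ENNReal.tsum_mul_left (f := fun b : Fin n → ℤ => ∏ l : Fin n, h l.succ (b l))]
    rw [ENNReal.tsum_mul_right, ih fun l => h l.succ, Fin.prod_univ_succ]

def Acell (k m : ℕ) (i : Fin k → ℤ) : Set (Fin k → ℝ) :=
  {z | ∀ l, qz m (z l) = (i l : ℝ) / m}

lemma mem_Acell {k m : ℕ} (hm : 1 ≤ m) {x : Fin k → ℝ} {i : Fin k → ℤ} :
    x ∈ Acell k m i ↔ ∀ l, ⌊(m:ℝ) * x l⌋ = i l := by
  have hmpos : (0:ℝ) < m := by exact_mod_cast hm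
  constructor
  · intro h l
    have h' := h l
    simp only [qz] at h'
    rw [div_eq_div_iff hmpos.ne' hmpos.ne'] at h'
    have := mul_right_cancel₀ hmpos.ne' h'
    exact_mod_cast this
  · intro h l
    simp only [Acell, Set.mem_setOf_eq, qz, h l]

lemma measurable_qz (m : ℕ) : Measurable (qz m) := by
  unfold qz
  exact (measurable_from_top.comp ((measurable_const.mul measurable_id).floor)).div_const _

lemma Acell_measurable (k m : ℕ) (i : Fin k → ℤ) : MeasurableSet (Acell k m i) := by
  have : Acell k m i = ⋂ l, (fun z : Fin k → ℝ => qz m (z l)) ⁻¹' {((i l : ℤ):ℝ)/m} := by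
    ext z; simp [Acell, Set.mem_iInter]
  rw [this]
  exact MeasurableSet.iInter fun l =>
    ((measurable_qz m).comp (measurable_pi_apply l)) (measurableSet_singleton _)

lemma main_aux {k : ℕ} (μX : MeasureTheory.Measure (Fin k → ℝ))
    [MeasureTheory.IsProbabilityMeasure μX] (m : ℕ) (hm : 1 ≤ m) (y : Fin k → ℝ) :
    (∫⁻ x, ENNReal.ofReal
        (((1 + 2 * ∑' i : ℕ, Real.exp (-(i : ℝ) ^ 2)) ^ k)⁻¹ *
          ((μX (Acell k m (fun l => ⌊(m:ℝ) * x l⌋))).toReal)⁻¹ *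
          Real.exp ((-(m : ℝ) ^ 2) * ∑ l, (y l - x l) ^ 2)) ∂μX) ≤ 1 := by
  have hmpos : (0:ℝ) < m := by exact_mod_cast hm
  set T : ℝ := ∑' i : ℕ, Real.exp (-(i : ℝ) ^ 2) with hT
  have hT0 : 0 ≤ T := tsum_nonneg fun n => (Real.exp_pos _).le
  set Nr : ℝ := 1 + 2 * T with hNr
  have hNpos : 0 < Nr := by rw [hNr]; linarith
  set Ninv : ℝ := (Nr ^ k)⁻¹ with hNinv
  have hNinv0 : 0 ≤ Ninv := by rw [hNinv]; positivity
  set A : (Fin k → ℤ) → Set (Fin k → ℝ) := Acell k m with hA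
  have hAmeas : ∀ i, MeasurableSet (A i) := fun i => Acell_measurable k m i
  have hdisj : Pairwise (Function.onFun Disjoint A) := by
    intro i j hij
    refine Set.disjoint_left.2 fun x hxi hxj => hij ?_
    have h1 := (mem_Acell hm).1 hxi
    have h2 := (mem_Acell hm).1 hxj
    exact funext fun l => (h1 l).symm.trans (h2 l)
  have hcover : (⋃ i, A i) = Set.univ := by
    refine Set.eq_univ_of_forall fun x => Set.mem_iUnion.2 ⟨fun l => ⌊(m:ℝ) * x l⌋, ?_⟩
    exact (mem_Acell hm).2 fun l => rfl
  set CC : (Fin k → ℤ) → ℝ≥0∞ := fun i => ENNReal.ofReal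
      (Ninv * ((μX (A i)).toReal)⁻¹ * ∏ l, Real.exp (-(dd ((m:ℝ) * y l) (i l)) ^ 2)) with hCC
  set DD : (Fin k → ℤ) → ℝ≥0∞ := fun i => ENNReal.ofReal Ninv *
      ∏ l, ENNReal.ofReal (Real.exp (-(dd ((m:ℝ) * y l) (i l)) ^ 2)) with hDD
  calc (∫⁻ x, ENNReal.ofReal
        (Ninv * ((μX (A (fun l => ⌊(m:ℝ) * x l⌋))).toReal)⁻¹ *
          Real.exp ((-(m : ℝ) ^ 2) * ∑ l, (y l - x l) ^ 2)) ∂μX)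
      = ∑' i, ∫⁻ x in A i, ENNReal.ofReal
        (Ninv * ((μX (A (fun l => ⌊(m:ℝ) * x l⌋))).toReal)⁻¹ *
          Real.exp ((-(m : ℝ) ^ 2) * ∑ l, (y l - x l) ^ 2)) ∂μX := by
        rw [← MeasureTheory.setLIntegral_univ, ← hcover,
          MeasureTheory.lintegral_iUnion hAmeas hdisj]
    _ ≤ ∑' i, CC i * μX (A i) := by
        refine ENNReal.tsum_le_tsum fun i => ?_
        rw [← MeasureTheory.setLIntegral_const (A i) (CC i)]
        refine MeasureTheory.setLIntegral_mono measurable_const fun x hx => ?_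
        have hfl := (mem_Acell hm).1 hx
        have hixeq : (fun l => ⌊(m:ℝ) * x l⌋) = i := funext hfl
        rw [hixeq, hCC]
        apply ENNReal.ofReal_le_ofReal
        have hexp : Real.exp ((-(m : ℝ) ^ 2) * ∑ l, (y l - x l) ^ 2) =
            ∏ l, Real.exp (-((m:ℝ) * y l - (m:ℝ) * x l) ^ 2) := by
          rw [← Real.exp_sum]
          congr 1
          rw [Finset.mul_sum]
          exact Finset.sum_congr rfl fun l _ => by ring
        rw [hexp]
        have hprod : (∏ l, Real.exp (-((m:ℝ) * y l - (m:ℝ) * x l) ^ 2)) ≤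
            ∏ l, Real.exp (-(dd ((m:ℝ) * y l) (i l)) ^ 2) := by
          refine Finset.prod_le_prod (fun l _ => (Real.exp_pos _).le) fun l _ => ?_
          have h1 : ((i l : ℤ) : ℝ) ≤ (m:ℝ) * x l := by
            rw [← hfl l]; exact Int.floor_le _
          have h2 : (m:ℝ) * x l < (i l : ℤ) + 1 := by
            rw [← hfl l]; exact Int.lt_floor_add_one _
          exact exp_le_dd h1 h2
        have hnn : 0 ≤ Ninv * ((μX (A i)).toReal)⁻¹ := by positivity
        exact mul_le_mul_of_nonneg_left hprod hnn
    _ ≤ ∑' i, DD i := by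
        refine ENNReal.tsum_le_tsum fun i => ?_
        have hkey : ENNReal.ofReal (((μX (A i)).toReal)⁻¹) * μX (A i) ≤ 1 := by
          rcases eq_or_ne (μX (A i)) 0 with h0 | h0
          · rw [h0, mul_zero]; exact zero_le_one
          · have hfin : μX (A i) ≠ ⊤ := MeasureTheory.measure_ne_top _ _
            rw [ENNReal.ofReal_inv_of_pos (ENNReal.toReal_pos h0 hfin),
              ENNReal.ofReal_toReal hfin, ENNReal.inv_mul_cancel h0 hfin]
        have hCCsplit : CC i = ENNReal.ofReal Ninv * ENNReal.ofReal (((μX (A i)).toReal)⁻¹) *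
            ∏ l, ENNReal.ofReal (Real.exp (-(dd ((m:ℝ) * y l) (i l)) ^ 2)) := by
          simp only [hCC]
          rw [ENNReal.ofReal_mul (by positivity), ENNReal.ofReal_mul hNinv0,
            ENNReal.ofReal_prod_of_nonneg fun l _ => (Real.exp_pos _).le]
        rw [hCCsplit]
        simp only [hDD]
        calc ENNReal.ofReal Ninv * ENNReal.ofReal (((μX (A i)).toReal)⁻¹) *
              (∏ l, ENNReal.ofReal (Real.exp (-(dd ((m:ℝ) * y l) (i l)) ^ 2))) * μX (A i)
            = ENNReal.ofReal Ninv *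
              (∏ l, ENNReal.ofReal (Real.exp (-(dd ((m:ℝ) * y l) (i l)) ^ 2))) *
              (ENNReal.ofReal (((μX (A i)).toReal)⁻¹) * μX (A i)) := by ring
          _ ≤ ENNReal.ofReal Ninv *
              (∏ l, ENNReal.ofReal (Real.exp (-(dd ((m:ℝ) * y l) (i l)) ^ 2))) * 1 :=
              mul_le_mul_right hkey _
          _ = _ := by rw [mul_one]
    _ = ENNReal.ofReal Ninv *
        ∏ l, ∑' jj : ℤ, ENNReal.ofReal (Real.exp (-(dd ((m:ℝ) * y l) jj) ^ 2)) := by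
        simp only [hDD]
        rw [ENNReal.tsum_mul_left,
          tsum_pi_prod (fun l jj => ENNReal.ofReal (Real.exp (-(dd ((m:ℝ) * y l) jj) ^ 2)))]
    _ ≤ ENNReal.ofReal Ninv * ∏ _l : Fin k, ENNReal.ofReal Nr := by
        refine mul_le_mul_right (Finset.prod_le_prod' fun l _ => ?_) _
        exact tsum_dd_le ((m:ℝ) * y l)
    _ = 1 := by
        rw [Finset.prod_const, Finset.card_univ, Fintype.card_fin, hNinv,
          ENNReal.ofReal_inv_of_pos (pow_pos hNpos k), ENNReal.ofReal_pow hNpos.le]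
        exact ENNReal.inv_mul_cancel
          (pow_ne_zero _ ((ENNReal.ofReal_pos.2 hNpos).ne'))
          (ENNReal.pow_ne_top ENNReal.ofReal_ne_top)

/-- the test function `λ_s` with `s = -m²` satisfies
`sup_y E[λ_s(X) e^{s ∑ (y_ℓ - X_ℓ)²}] ≤ 1`. -/
theorem test_function_constraint {k : ℕ} (μX : Measure (Fin k → ℝ))
    [IsProbabilityMeasure μX] (m : ℕ) (hm : 1 ≤ m) :
    ∀ y : Fin k → ℝ,
      (∫⁻ x, ENNReal.ofReal
          (((1 + 2 * ∑' i : ℕ, Real.exp (-(i : ℝ) ^ 2)) ^ k)⁻¹ *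
            (∑' i : Fin k → ℤ,
              Set.indicator {z : Fin k → ℝ | ∀ l, qz m (z l) = (i l : ℝ) / m}
                (fun _ => ((μX {z : Fin k → ℝ | ∀ l, qz m (z l) = (i l : ℝ) / m}).toReal)⁻¹) x) *
            Real.exp ((-(m : ℝ) ^ 2) * ∑ l, (y l - x l) ^ 2)) ∂μX) ≤ 1 := by
  intro y
  have key : ∀ x : Fin k → ℝ,
      (∑' i : Fin k → ℤ,
        Set.indicator {z : Fin k → ℝ | ∀ l, qz m (z l) = (i l : ℝ) / m}
          (fun _ => ((μX {z : Fin k → ℝ | ∀ l, qz m (z l) = (i l : ℝ) / m}).toReal)⁻¹) x)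
        = ((μX (Acell k m (fun l => ⌊(m:ℝ) * x l⌋))).toReal)⁻¹ := by
    intro x
    have hmem : x ∈ Acell k m (fun l => ⌊(m:ℝ) * x l⌋) := (mem_Acell hm).2 fun l => rfl
    rw [tsum_eq_single (fun l => ⌊(m:ℝ) * x l⌋) ?_]
    · exact Set.indicator_of_mem hmem _
    · intro j hj
      refine Set.indicator_of_notMem (fun hxj => hj ?_) _
      exact funext fun l => (((mem_Acell hm).1 hxj) l).symm
  simp only [key]
  exact main_aux μX m hm y
end

section
/- Bussgang-type quantization bound: if X is Gaussian with mean μ and variance σ² and Z = ⌊mX⌋/m, then the correlation coefficient a₁ = E[(Z − E Z)(X − μ)]/σ² satisfies |1 − a₁| ≤ (1/m)√(2/(πσ²)). -/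
open MeasureTheory ProbabilityTheory Real Filter Topology
open scoped ENNReal NNReal Classical

/-! The quantization error `e = Z - X` satisfies `|e| ≤ 1/m`, and `cov(Z, X) = Var X + cov(e, X)`.
As `X - μ` is centred, `cov(e, X) = 𝔼[e (X - μ)]`, which is at most
`(1/m) 𝔼|X - μ| = (1/m) σ √(2/π)` in absolute value; dividing by `σ²` gives the bound. -/

section Covariance

variable {Ω : Type*} [MeasurableSpace Ω] {μ : Measure Ω} [IsProbabilityMeasure μ]
  {X Y : Ω → ℝ} {ε : ℝ}

lemma abs_covariance_le_of_abs_le (hX : Integrable X μ) (hY : AEStronglyMeasurable Y μ)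
    (hYε : ∀ ω, |Y ω| ≤ ε) : |cov[Y, X; μ]| ≤ ε * ∫ ω, |X ω - μ[X]| ∂μ := by
  have hXc : Integrable (fun ω => X ω - μ[X]) μ := hX.sub (integrable_const _)
  have hcov : cov[Y, X; μ] = ∫ ω, Y ω * (X ω - μ[X]) ∂μ := by
    simp only [covariance, sub_mul]
    rw [integral_sub (hXc.bdd_mul hY (ae_of_all _ hYε)) (hXc.const_mul _), integral_const_mul,
      integral_sub hX (integrable_const _)]
    simp
  rw [hcov, ← integral_const_mul, ← Real.norm_eq_abs]
  refine norm_integral_le_of_norm_le (hXc.abs.const_mul ε) (ae_of_all _ fun ω => ?_)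
  rw [norm_mul, Real.norm_eq_abs, Real.norm_eq_abs]
  exact mul_le_mul_of_nonneg_right (hYε ω) (abs_nonneg _)

lemma abs_covariance_sub_variance_le (hX : MemLp X 2 μ) (hY : AEStronglyMeasurable Y μ)
    (hYX : ∀ ω, |Y ω - X ω| ≤ ε) :
    |cov[Y, X; μ] - Var[X; μ]| ≤ ε * ∫ ω, |X ω - μ[X]| ∂μ := by
  have hYX2 : MemLp (Y - X) 2 μ :=
    .of_bound (hY.sub hX.aestronglyMeasurable) ε (ae_of_all _ hYX)
  have hY2 : MemLp Y 2 μ := by simpa using hYX2.add hX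
  rw [← covariance_self hX.aemeasurable, ← covariance_sub_left hY2 hX hX]
  exact abs_covariance_le_of_abs_le (hX.integrable one_le_two) hYX2.aestronglyMeasurable hYX

end Covariance

lemma integral_Ioi_mul_exp_neg_mul_sq {b : ℝ} (hb : 0 < b) :
    ∫ x in Set.Ioi (0 : ℝ), x * exp (-b * x ^ 2) = (2 * b)⁻¹ := by
  have h := integral_rpow_mul_exp_neg_mul_rpow two_pos (by norm_num : (-1 : ℝ) < 1) hb
  norm_num [Real.rpow_two, Real.rpow_neg_one] at h
  simp only [neg_mul, h]
  ring

lemma integral_abs_mul_exp_neg_mul_sq {b : ℝ} (hb : 0 < b) :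
    ∫ x, |x| * exp (-b * x ^ 2) = b⁻¹ := by
  have h := integral_comp_abs (f := fun x => x * exp (-b * x ^ 2))
  simp only [sq_abs] at h
  rw [h, integral_Ioi_mul_exp_neg_mul_sq hb]
  field_simp

lemma integral_abs_sub_gaussianReal (μ : ℝ) (v : ℝ≥0) :
    ∫ x, |x - μ| ∂gaussianReal μ v = √(2 * v / π) := by
  rcases eq_or_ne v 0 with rfl | hv
  · simp [gaussianReal_zero_var]
  have hv' : (0 : ℝ) < v := by positivity
  set f : ℝ → ℝ := fun y ↦ (√(2 * π * v))⁻¹ * (|y| * exp (-((2 : ℝ) * v)⁻¹ * y ^ 2))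
  calc ∫ x, |x - μ| ∂gaussianReal μ v = ∫ x, f (x - μ) := by
        rw [integral_gaussianReal_eq_integral_smul hv]
        congr with x
        rw [gaussianPDFReal, smul_eq_mul, neg_div, div_eq_inv_mul]
        simp only [f, neg_mul]
        ring
    _ = (√(2 * π * v))⁻¹ * (2 * v) := by
        rw [integral_sub_right_eq_self f μ, integral_const_mul,
          integral_abs_mul_exp_neg_mul_sq (by positivity), inv_inv]
    _ = √(2 * v / π) := by
        rw [show 2 * v / π = (2 * v) ^ 2 / (2 * π * v) by field_simp,
          sqrt_div' _ (by positivity), sqrt_sq (by positivity)]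
        ring

lemma abs_qz_sub_le {m : ℕ} (hm : 0 < m) (x : ℝ) : |qz m x - x| ≤ 1 / m := by
  have h : qz m x - x = -Int.fract ((m : ℝ) * x) / m := by
    rw [qz, Int.fract]
    field_simp
    ring
  rw [h, abs_div, abs_neg, abs_of_nonneg (Int.fract_nonneg _), Nat.abs_cast]
  gcongr
  exact (Int.fract_lt_one _).le

/-- Bussgang-type bound `|1 - a₁| ≤ (1/m)√(2/(πσ²))` for the quantization
of a Gaussian random variable. -/
theorem bussgang_quantization_bound {Ω : Type*} [MeasurableSpace Ω] (μ : Measure Ω)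
    [IsProbabilityMeasure μ] (X : Ω → ℝ) (hX : Measurable X) (μ0 : ℝ) (v : ℝ≥0)
    (hv : 0 < v) (hgauss : μ.map X = gaussianReal μ0 v) (m : ℕ) (hm : 1 ≤ m) :
    |1 - (∫ ω, (qz m (X ω) - ∫ ω', qz m (X ω') ∂μ) * (X ω - μ0) ∂μ) / (v : ℝ)| ≤
      (1 / m) * Real.sqrt (2 / (Real.pi * (v : ℝ))) := by
  have hv' : (0 : ℝ) < v := hv
  have hlaw : HasLaw X (gaussianReal μ0 v) μ := ⟨hX.aemeasurable, hgauss⟩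
  have hmean : μ[X] = μ0 := by rw [hlaw.integral_eq, integral_id_gaussianReal]
  have hvar : Var[X; μ] = v := by rw [hlaw.variance_eq, variance_id_gaussianReal]
  have hX2 : MemLp X 2 μ :=
    (memLp_map_measure_iff aestronglyMeasurable_id hX.aemeasurable).1
      (hgauss ▸ memLp_id_gaussianReal 2)
  have habs : ∫ ω, |X ω - μ0| ∂μ = √(2 * v / π) := by
    rw [← integral_abs_sub_gaussianReal]
    exact hlaw.integral_comp (f := fun x => |x - μ0|) (by fun_prop)
  have hbound := abs_covariance_sub_variance_le hX2
    ((measurable_qz m).comp hX).aestronglyMeasurable fun ω => abs_qz_sub_le hm (X ω)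
  rw [hmean, hvar, habs] at hbound
  have hcov : ∫ ω, (qz m (X ω) - ∫ ω', qz m (X ω') ∂μ) * (X ω - μ0) ∂μ =
      cov[qz m ∘ X, X; μ] := by
    rw [← hmean]
    rfl
  rw [hcov]
  calc |1 - cov[qz m ∘ X, X; μ] / v| = |cov[qz m ∘ X, X; μ] - v| / v := by
        rw [one_sub_div hv'.ne', abs_div, abs_sub_comm, abs_of_pos hv']
    _ ≤ 1 / m * √(2 * v / π) / v := by gcongr
    _ = 1 / m * √(2 / (π * v)) := by
        rw [mul_div_assoc, ← sqrt_sq hv'.le, ← sqrt_div' _ (sq_nonneg _), sqrt_sq hv'.le]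
        congr 2
        field_simp
end
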